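/- (Preparation of the dataset.) Let d ≥ 2 and let {x_i}_{i=1}^N ⊂ ℝ^d be pairwise distinct points. Then there exist τ > 0 and piecewise constant controls A, W : [0,τ] → ℝ^{d×d} and b : [0,τ] → ℝ^d such that the flow of the Neural ODE satisfies φ_τ(x_i; A, W, b)^{(1)} ≠ φ_τ(x_j; A, W, b)^{(1)} for all i ≠ j; i.e., after the controlled evolution all the points have pairwise distinct first coordinates (and, by injectivity of the flow, remain pairwise distinct). -/

import Mathlib

open MeasureTheory Set

noncomputable section

/-- The ReLU activation applied componentwise. -/
def reluVec {d : ℕ} (x : EuclideanSpace ℝ (Fin d)) : EuclideanSpace ℝ (Fin d) :=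
  WithLp.toLp 2 (fun k => max (x k) 0)

/-- A matrix acting on a vector of `EuclideanSpace ℝ (Fin d)`. -/
def mvec {d : ℕ} (M : Matrix (Fin d) (Fin d) ℝ) (x : EuclideanSpace ℝ (Fin d)) :
    EuclideanSpace ℝ (Fin d) :=
  WithLp.toLp 2 (fun i => ∑ j, M i j * x j)

/-- `f` is piecewise constant on `[0,T]` with (finite) switching set `S`:
it is constant on the pieces of `[0,T]` between consecutive points of `S`. -/
def PCOn {α : Type*} (f : ℝ → α) (T : ℝ) (S : Finset ℝ) : Prop :=
  ∀ t₁ ∈ Set.Icc (0:ℝ) T, ∀ t₂ ∈ Set.Icc (0:ℝ) T, t₁ ≤ t₂ →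
    (∀ s ∈ S, s ∉ Set.Ioc t₁ t₂) → f t₁ = f t₂

/-- `x` is a solution on `[0,T]` of the neural ODE
`ẋ = W(t) σ(A(t) x + b(t))` (ReLU activation), with switching set `S`. -/
def SolvesNODE {d : ℕ} (A W : ℝ → Matrix (Fin d) (Fin d) ℝ)
    (b : ℝ → EuclideanSpace ℝ (Fin d)) (T : ℝ) (S : Finset ℝ)
    (x : ℝ → EuclideanSpace ℝ (Fin d)) : Prop :=
  ContinuousOn x (Set.Icc 0 T) ∧
  ∀ t ∈ Set.Icc (0:ℝ) T, t ∉ S →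
    HasDerivWithinAt x (mvec (W t) (reluVec (mvec (A t) (x t) + b t))) (Set.Icc 0 T) t

/-- `φ` is the time-`T` flow map of the neural ODE. -/
def IsFlowNODE {d : ℕ} (A W : ℝ → Matrix (Fin d) (Fin d) ℝ)
    (b : ℝ → EuclideanSpace ℝ (Fin d)) (T : ℝ) (S : Finset ℝ)
    (φ : EuclideanSpace ℝ (Fin d) → EuclideanSpace ℝ (Fin d)) : Prop :=
  ∀ x₀, ∃ x, SolvesNODE A W b T S x ∧ x 0 = x₀ ∧ x T = φ x₀

/-- The operator norm of a matrix acting on Euclidean space. -/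
def matOpNorm {d : ℕ} (M : Matrix (Fin d) (Fin d) ℝ) : ℝ :=
  sSup ((fun x => ‖mvec M x‖) '' Metric.closedBall (0 : EuclideanSpace ℝ (Fin d)) 1)

/-- `Γ` can be covered, for every `h ∈ (0,1)`, by at most `C h^(-D)` closed
axis-parallel cubes of side `h`. -/
def CoveredByCubes {d : ℕ} (Γ : Set (EuclideanSpace ℝ (Fin d))) (C D : ℝ) : Prop :=
  ∀ h : ℝ, 0 < h → h < 1 →
    ∃ F : Finset (EuclideanSpace ℝ (Fin d)),
      (F.card : ℝ) ≤ C * h ^ (-D) ∧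
      Γ ⊆ ⋃ c ∈ F, {x | ∀ k, c k ≤ x k ∧ x k ≤ c k + h}

/-! Choose a linear functional `ℓ` with `ℓ e₁ = 1` that is injective on the data: over the
infinite field `ℝ`, finitely many nonzero vectors (`e₁` and the differences `xᵢ - xⱼ`) are never
all annihilated by the same hyperplane. Then `g = ℓ - x⁽¹⁾` vanishes on `e₁`, and for a constant `β`
with `g xᵢ + β ≥ 0` the constant controls `A = e₁ gᵀ`, `W = e₁ e₁ᵀ`, `b = β e₁` give the field
`ẋ = max (g x + β) 0 · e₁`. It preserves `g`, so at time `1` the first coordinate of the `i`-th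
point is `xᵢ⁽¹⁾ + g xᵢ + β = ℓ xᵢ + β`, and these are pairwise distinct. -/

lemma Module.exists_dual_apply_eq_one_and_injective_comp {K M ι : Type*} [Field K] [Infinite K]
    [AddCommGroup M] [Module K M] [Finite ι] {x : ι → M} (hx : Function.Injective x)
    {e : M} (he : e ≠ 0) :
    ∃ f : Module.Dual K M, f e = 1 ∧ Function.Injective (f ∘ x) := by
  let v : Option {p : ι × ι // p.1 ≠ p.2} → M := fun o => o.elim e fun p => x p.1.1 - x p.1.2
  have hv : ∀ o, v o ≠ 0 := by
    rintro (_ | ⟨⟨i, j⟩, hij⟩)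
    · exact he
    · exact sub_ne_zero.2 (hx.ne hij)
  obtain ⟨f, hf⟩ := Module.exists_dual_forall_apply_ne_zero (K := K) v hv
  have hfe : f e ≠ 0 := hf none
  refine ⟨(f e)⁻¹ • f, inv_mul_cancel₀ hfe, fun i j hij => ?_⟩
  by_contra hne
  have hfij : f (x i) = f (x j) := by simpa [hfe] using hij
  exact hf (some ⟨(i, j), hne⟩) (by simpa [v, sub_eq_zero] using hfij)

lemma PCOn_const {α : Type*} (a : α) (T : ℝ) (S : Finset ℝ) : PCOn (fun _ => a) T S :=
  fun _ _ _ _ _ _ => rfl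

section ShearFlow

variable {d : ℕ} (k : Fin d)

lemma Module.Dual.sum_apply_single_mul (ℓ : Module.Dual ℝ (EuclideanSpace ℝ (Fin d)))
    (y : EuclideanSpace ℝ (Fin d)) : ∑ j, ℓ (EuclideanSpace.single j 1) * y j = ℓ y := by
  conv_rhs => rw [← (EuclideanSpace.basisFun (Fin d) ℝ).toBasis.sum_repr y]
  simp [mul_comm]

lemma mvec_of_piSingle (ℓ : Module.Dual ℝ (EuclideanSpace ℝ (Fin d)))
    (y : EuclideanSpace ℝ (Fin d)) :
    mvec (Matrix.of (Pi.single k fun j => ℓ (EuclideanSpace.single j 1))) y =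
      EuclideanSpace.single k (ℓ y) := by
  ext i
  rcases eq_or_ne i k with rfl | hi
  · simp [mvec, ℓ.sum_apply_single_mul]
  · simp [mvec, hi]

lemma mvec_single_one (y : EuclideanSpace ℝ (Fin d)) :
    mvec (Matrix.single k k 1) y = EuclideanSpace.single k (y k) := by
  ext i
  rcases eq_or_ne i k with rfl | hi
  · simp [mvec, Matrix.single_apply]
  · simp [mvec, Matrix.single_apply, hi, Ne.symm hi]

lemma reluVec_single (a : ℝ) :
    reluVec (EuclideanSpace.single k a) = EuclideanSpace.single k (max a 0) := by
  ext i
  rcases eq_or_ne i k with rfl | hi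
  · simp [reluVec]
  · simp [reluVec, hi]

lemma solvesNODE_shear (g : Module.Dual ℝ (EuclideanSpace ℝ (Fin d)))
    (hg : g (EuclideanSpace.single k 1) = 0) (β T : ℝ) (S : Finset ℝ)
    (y : EuclideanSpace ℝ (Fin d)) (hy : 0 ≤ g y + β) :
    SolvesNODE (fun _ => Matrix.of (Pi.single k fun j => g (EuclideanSpace.single j 1)))
      (fun _ => Matrix.single k k 1) (fun _ => EuclideanSpace.single k β) T S
      (fun t => y + t • EuclideanSpace.single k (g y + β)) := by
  have hg_const : ∀ t : ℝ, g (y + t • EuclideanSpace.single k (g y + β)) = g y := fun t => by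
    have hsingle : EuclideanSpace.single k (g y + β) = (g y + β) • EuclideanSpace.single k 1 := by
      ext i; simp
    rw [hsingle, map_add, map_smul, map_smul, hg, smul_zero, smul_zero, add_zero]
  refine ⟨by fun_prop, fun t _ _ => ?_⟩
  have hderiv := (((hasDerivAt_id t).smul_const
    (EuclideanSpace.single k (g y + β))).const_add y).hasDerivWithinAt (s := Set.Icc 0 T)
  simp only [id, one_smul] at hderiv
  refine hderiv.congr_deriv ?_
  rw [mvec_of_piSingle, hg_const, ← PiLp.single_add, reluVec_single, mvec_single_one,
    PiLp.single_eq_same, max_eq_left hy]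

end ShearFlow

/-- **Preparation of the dataset** (Step 1 of the proof of Theorem 1).
Given pairwise distinct points in `ℝ^d` (`d ≥ 2`), there is a time `τ > 0` and
piecewise constant controls such that after the controlled neural-ODE evolution
all the points have pairwise distinct first coordinates. -/
theorem dataset_preparation
    (d N : ℕ) (hd : 2 ≤ d)
    (x : Fin N → EuclideanSpace ℝ (Fin d)) (hx : Function.Injective x) :
    ∃ τ : ℝ, 0 < τ ∧
      ∃ (A W : ℝ → Matrix (Fin d) (Fin d) ℝ) (b : ℝ → EuclideanSpace ℝ (Fin d))
        (S : Finset ℝ),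
        PCOn A τ S ∧ PCOn W τ S ∧ PCOn b τ S ∧
        ∃ X : Fin N → ℝ → EuclideanSpace ℝ (Fin d),
          (∀ i, SolvesNODE A W b τ S (X i)) ∧
          (∀ i, X i 0 = x i) ∧
          (∀ i j, i ≠ j → X i τ ⟨0, by omega⟩ ≠ X j τ ⟨0, by omega⟩) := by
  set k : Fin d := ⟨0, by omega⟩
  obtain ⟨ℓ, hℓk, hℓx⟩ := Module.exists_dual_apply_eq_one_and_injective_comp (K := ℝ) hx
    (e := EuclideanSpace.single k 1) (by simp)
  set g := ℓ - (EuclideanSpace.proj (𝕜 := ℝ) k).toLinearMap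
  have hg : ∀ y, g y = ℓ y - y k := fun y => by simp [g]
  obtain ⟨m, hm⟩ := (Set.finite_range (g ∘ x)).bddBelow
  refine ⟨1, one_pos, _, _, _, ∅, PCOn_const _ _ _, PCOn_const _ _ _, PCOn_const _ _ _,
    fun i t => x i + t • EuclideanSpace.single k (g (x i) + -m),
    fun i => solvesNODE_shear k g (by simp [hg, hℓk]) (-m) 1 ∅ (x i) ?_, fun i => by simp,
    fun i j hij => ?_⟩
  · have hmi : m ≤ g (x i) := hm ⟨i, rfl⟩
    linarith
  · intro hfirst
    apply hℓx.ne hij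
    simp only [hg, PiLp.add_apply, PiLp.single_eq_same, one_smul] at hfirst
    simp only [Function.comp_apply]
    linarith
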